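/- arXiv:1602.06567 — 2 statements merged into one kernel-verified Lean document; each statement's English description precedes it below -/
import Mathlib

section
/- Let (E, ‖·‖) be a two-dimensional real normed space and let ω be a nonzero alternating bilinear form on E such that the norm equals its antinorm: ‖x‖ = sup{|ω(y, x)| : ‖y‖ = 1} for all x ∈ E. Let v, w be unit vectors with v ⊣_B w and w ⊣_B v (a pair of conjugate directions), and set Q₁ := {a·v + b·w : a, b ≥ 0}. Then for every λ ∈ [0,1], writing z_λ := (1−λ)·w − λ·v, one has ‖z_λ‖ = sup{|ω(x, z_λ)| : x ∈ Q₁, ‖x‖ ≤ 1}; that is, each point z_λ/‖z_λ‖ of the unit circle in the second quadrant is obtained from the first-quadrant arc of the unit circle by the Radon-curve construction. -/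
/-- Birkhoff orthogonality: `x ⊣_B y` iff `‖x‖ ≤ ‖x + t • y‖` for every `t`. -/
def BirkhoffOrth {E : Type*} [NormedAddCommGroup E] [NormedSpace ℝ E]
    (x y : E) : Prop := ∀ t : ℝ, ‖x‖ ≤ ‖x + t • y‖

set_option maxHeartbeats 1000000 in
/-- In a normed plane whose norm coincides with its antinorm, each unit vector
of the second quadrant is obtained from the first-quadrant arc of the unit
circle by the Radon-curve construction: for conjugate unit directions `v, w`
and `z_λ = (1−λ)w − λv`, one has
`‖z_λ‖ = sup{|ω(x, z_λ)| : x ∈ Q₁, ‖x‖ ≤ 1}`. -/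
theorem stmt_16 {E : Type*} [NormedAddCommGroup E] [NormedSpace ℝ E]
    (hdim : Module.finrank ℝ E = 2)
    (ω : E →ₗ[ℝ] E →ₗ[ℝ] ℝ) (halt : ∀ x : E, ω x x = 0) (hω : ω ≠ 0)
    (hnorm : ∀ x : E, ‖x‖ = sSup ((fun y => |ω y x|) '' Metric.sphere (0 : E) 1))
    (v w : E) (hv : ‖v‖ = 1) (hw : ‖w‖ = 1)
    (hvw : BirkhoffOrth v w) (hwv : BirkhoffOrth w v)
    (Q₁ : Set E) (hQ₁ : Q₁ = {p | ∃ a b : ℝ, 0 ≤ a ∧ 0 ≤ b ∧ p = a • v + b • w}) :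
    ∀ l ∈ Set.Icc (0 : ℝ) 1,
      ‖(1 - l) • w - l • v‖ =
        sSup {r : ℝ | ∃ x ∈ Q₁, ‖x‖ ≤ 1 ∧ r = |ω x ((1 - l) • w - l • v)|} := by
  intro l hl
  obtain ⟨hl0, hl1⟩ := hl
  set z := (1 - l) • w - l • v with hz
  set c := ω v w with hc
  -- coordinate bounds from Birkhoff orthogonality
  have hA : ∀ a b : ℝ, |a| ≤ ‖a • v + b • w‖ := by
    intro a b
    rcases eq_or_ne a 0 with h | h
    · simp [h]
    · have he : a • v + b • w = a • (v + (b / a) • w) := by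
        rw [smul_add, smul_smul, mul_div_cancel₀ _ h]
      calc |a| = |a| * ‖v‖ := by rw [hv, mul_one]
        _ ≤ |a| * ‖v + (b / a) • w‖ :=
            mul_le_mul_of_nonneg_left (hvw _) (abs_nonneg a)
        _ = ‖a • (v + (b / a) • w)‖ := by rw [norm_smul, Real.norm_eq_abs]
        _ = ‖a • v + b • w‖ := by rw [he]
  have hB : ∀ a b : ℝ, |b| ≤ ‖a • v + b • w‖ := by
    intro a b
    rcases eq_or_ne b 0 with h | h
    · simp [h]
    · have he : a • v + b • w = b • (w + (a / b) • v) := by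
        rw [smul_add, smul_smul, mul_div_cancel₀ _ h, add_comm]
      calc |b| = |b| * ‖w‖ := by rw [hw, mul_one]
        _ ≤ |b| * ‖w + (a / b) • v‖ :=
            mul_le_mul_of_nonneg_left (hwv _) (abs_nonneg b)
        _ = ‖b • (w + (a / b) • v)‖ := by rw [norm_smul, Real.norm_eq_abs]
        _ = ‖a • v + b • w‖ := by rw [he]
  -- skew-symmetry
  have hskew : ω w v = -c := by
    have h := halt (v + w)
    simp only [map_add, LinearMap.add_apply, halt] at h
    rw [hc]; linarith
  have hcomp : ∀ a b : ℝ, ω (a • v + b • w) z = (a * (1 - l) + b * l) * c := by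
    intro a b
    simp only [hz, map_add, map_sub, map_smul, LinearMap.add_apply, LinearMap.sub_apply,
      LinearMap.smul_apply, smul_eq_mul, halt, hskew, hc]
    ring
  -- every vector decomposes in the basis (v, w)
  haveI : FiniteDimensional ℝ E := FiniteDimensional.of_finrank_eq_succ hdim
  have hli : LinearIndependent ℝ ![v, w] := by
    rw [LinearIndependent.pair_iff]
    intro s t hst
    have h1 := hA s t
    have h2 := hB s t
    rw [hst, norm_zero] at h1 h2
    exact ⟨abs_eq_zero.mp (le_antisymm h1 (abs_nonneg s)),
      abs_eq_zero.mp (le_antisymm h2 (abs_nonneg t))⟩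
  have hspan : ∀ y : E, ∃ a b : ℝ, y = a • v + b • w := by
    intro y
    have hsp := hli.span_eq_top_of_card_eq_finrank (by simp [hdim])
    have hy : y ∈ Submodule.span ℝ (Set.range ![v, w]) := hsp ▸ Submodule.mem_top
    have hrange : Set.range ![v, w] = {v, w} := by
      ext x; simp [Matrix.range_cons, Matrix.range_empty, or_comm]
    rw [hrange] at hy
    obtain ⟨a, b, hab⟩ := Submodule.mem_span_pair.mp hy
    exact ⟨a, b, hab.symm⟩
  set S := {r : ℝ | ∃ x ∈ Q₁, ‖x‖ ≤ 1 ∧ r = |ω x z|} with hS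
  set A := (fun y => |ω y z|) '' Metric.sphere (0 : E) 1 with hAset
  -- bounds
  have hSle : ∀ r ∈ S, r ≤ |c| := by
    rintro r ⟨x, hxQ, hx1, rfl⟩
    rw [hQ₁] at hxQ
    obtain ⟨a, b, ha, hb, rfl⟩ := hxQ
    have h1 : |a| ≤ 1 := le_trans (hA a b) hx1
    have h2 : |b| ≤ 1 := le_trans (hB a b) hx1
    rw [abs_le] at h1 h2
    rw [hcomp, abs_mul]
    have ht : |a * (1 - l) + b * l| ≤ 1 := by
      rw [abs_le]; constructor <;> nlinarith
    nlinarith [abs_nonneg c]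
  have bddS : BddAbove S := ⟨|c|, fun r hr => hSle r hr⟩
  have hAle : ∀ r ∈ A, r ≤ |c| := by
    rintro r ⟨y, hy, rfl⟩
    rw [mem_sphere_zero_iff_norm] at hy
    obtain ⟨a, b, rfl⟩ := hspan y
    have h1 : |a| ≤ 1 := by rw [← hy]; exact hA a b
    have h2 : |b| ≤ 1 := by rw [← hy]; exact hB a b
    rw [abs_le] at h1 h2
    simp only [hcomp, abs_mul]
    have ht : |a * (1 - l) + b * l| ≤ 1 := by
      rw [abs_le]; constructor <;> nlinarith
    nlinarith [abs_nonneg c]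
  have bddA : BddAbove A := ⟨|c|, fun r hr => hAle r hr⟩
  -- some elements of S
  have h0S : (0 : ℝ) ∈ S := by
    refine ⟨0, ?_, by simp, by simp⟩
    rw [hQ₁]; exact ⟨0, 0, le_refl _, le_refl _, by simp⟩
  have hvval : ω v z = (1 - l) * c := by
    have := hcomp 1 0
    simpa using this
  have hwval : ω w z = l * c := by
    have := hcomp 0 1
    simpa using this
  have hvS : (1 - l) * |c| ∈ S := by
    refine ⟨v, ?_, le_of_eq hv, ?_⟩
    · rw [hQ₁]; exact ⟨1, 0, zero_le_one, le_refl _, by simp⟩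
    · rw [hvval, abs_mul, abs_of_nonneg (by linarith : (0:ℝ) ≤ 1 - l)]
  have hwS : l * |c| ∈ S := by
    refine ⟨w, ?_, le_of_eq hw, ?_⟩
    · rw [hQ₁]; exact ⟨0, 1, le_refl _, zero_le_one, by simp⟩
    · rw [hwval, abs_mul, abs_of_nonneg hl0]
  have hsupS0 : (0 : ℝ) ≤ sSup S := le_csSup bddS h0S
  apply le_antisymm
  · -- ‖z‖ ≤ sSup S
    rw [hnorm z]
    apply Real.sSup_le _ hsupS0
    rintro r ⟨y, hy, rfl⟩
    rw [mem_sphere_zero_iff_norm] at hy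
    obtain ⟨a, b, rfl⟩ := hspan y
    have h1 : |a| ≤ 1 := by rw [← hy]; exact hA a b
    have h2 : |b| ≤ 1 := by rw [← hy]; exact hB a b
    rw [abs_le] at h1 h2
    simp only
    rcases le_or_gt 0 a with ha | ha <;> rcases le_or_gt 0 b with hb | hb
    · refine le_csSup bddS ⟨a • v + b • w, ?_, le_of_eq hy, rfl⟩
      rw [hQ₁]; exact ⟨a, b, ha, hb, rfl⟩
    · -- a ≥ 0, b < 0 : mixed signs
      have ht : |a * (1 - l) + b * l| ≤ max (1 - l) l := by
        rw [abs_le]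
        constructor
        · refine le_trans (neg_le_neg (le_max_right (1 - l) l)) ?_
          nlinarith
        · refine le_trans ?_ (le_max_left (1 - l) l)
          nlinarith
      calc |ω (a • v + b • w) z| = |a * (1 - l) + b * l| * |c| := by
            rw [hcomp, abs_mul]
        _ ≤ max (1 - l) l * |c| :=
            mul_le_mul_of_nonneg_right ht (abs_nonneg c)
        _ = max ((1 - l) * |c|) (l * |c|) := max_mul_of_nonneg _ _ (abs_nonneg c)
        _ ≤ sSup S := max_le (le_csSup bddS hvS) (le_csSup bddS hwS)
    · -- a < 0, b ≥ 0 : mixed signs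
      have ht : |a * (1 - l) + b * l| ≤ max (1 - l) l := by
        rw [abs_le]
        constructor
        · refine le_trans (neg_le_neg (le_max_left (1 - l) l)) ?_
          nlinarith
        · refine le_trans ?_ (le_max_right (1 - l) l)
          nlinarith
      calc |ω (a • v + b • w) z| = |a * (1 - l) + b * l| * |c| := by
            rw [hcomp, abs_mul]
        _ ≤ max (1 - l) l * |c| :=
            mul_le_mul_of_nonneg_right ht (abs_nonneg c)
        _ = max ((1 - l) * |c|) (l * |c|) := max_mul_of_nonneg _ _ (abs_nonneg c)
        _ ≤ sSup S := max_le (le_csSup bddS hvS) (le_csSup bddS hwS)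
    · -- both negative: use the opposite vector
      refine le_csSup bddS ⟨(-a) • v + (-b) • w, ?_, ?_, ?_⟩
      · rw [hQ₁]; exact ⟨-a, -b, by linarith, by linarith, rfl⟩
      · have h3 : (-a) • v + (-b) • w = -(a • v + b • w) := by
          rw [neg_smul, neg_smul]; abel
        rw [h3, norm_neg, hy]
      · rw [hcomp, hcomp]
        have : (-a) * (1 - l) + (-b) * l = -(a * (1 - l) + b * l) := by ring
        rw [this, neg_mul, abs_neg]
  · -- sSup S ≤ ‖z‖
    apply Real.sSup_le _ (norm_nonneg z)
    rintro r ⟨x, hxQ, hx1, rfl⟩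
    rcases eq_or_ne x 0 with rfl | hx0
    · simp
    · have hxn : ‖x‖ ≠ 0 := norm_ne_zero_iff.mpr hx0
      have hxp : (0:ℝ) < ‖x‖ := lt_of_le_of_ne (norm_nonneg x) (Ne.symm hxn)
      have hun : ‖(‖x‖⁻¹ • x)‖ = 1 := by
        rw [norm_smul, norm_inv, norm_norm, inv_mul_cancel₀ hxn]
      have huA : |ω (‖x‖⁻¹ • x) z| ∈ A :=
        Set.mem_image_of_mem _ (mem_sphere_zero_iff_norm.mpr hun)
      have hle : |ω (‖x‖⁻¹ • x) z| ≤ ‖z‖ := by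
        rw [hnorm z]; exact le_csSup bddA huA
      have hval : ω (‖x‖⁻¹ • x) z = ‖x‖⁻¹ * ω x z := by
        rw [LinearMap.map_smul₂, smul_eq_mul]
      rw [hval, abs_mul, abs_inv, abs_norm] at hle
      calc |ω x z| = ‖x‖ * (‖x‖⁻¹ * |ω x z|) := by
            rw [← mul_assoc, mul_inv_cancel₀ hxn, one_mul]
        _ ≤ 1 * ‖z‖ :=
            mul_le_mul hx1 hle (by positivity) zero_le_one
        _ = ‖z‖ := one_mul _
end

section
/- Let (E, ‖·‖) be a two-dimensional real normed space and let ω be a nonzero alternating bilinear form on E. Then Birkhoff orthogonality is a symmetric relation on E (i.e., for all x, y ∈ E, x ⊣_B y implies y ⊣_B x) if and only if there exists λ > 0 such that |ω(x, y)| = λ whenever x, y ∈ E satisfy ‖x‖ = ‖y‖ = 1 and x ⊣_B y. -/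
/-!
Let `antinorm ω y` be the norm of the functional `ω(·, y)`. Its kernel is the line `ℝ y`, so
`x ⊣_B y` says exactly that `x` attains this norm: `|ω(x, y)| = ‖x‖ * antinorm ω y`. If the
antinorm is `λ ‖·‖`, this condition reads `|ω(x, y)| = λ ‖x‖ ‖y‖` and is symmetric. Conversely,
constant area of unit Birkhoff rectangles gives `antinorm = λ ‖·‖`, because every direction is
Birkhoff orthogonal to some nonzero vector.

For the hard direction parametrize directions by `θ ↦ cos θ • e₁ + sin θ • e₂` with
`ω(e₁, e₂) = 1`. Then `ω` becomes `sin (φ - θ)`, and we write `N` and `A` for the norm and the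
antinorm along this curve. Always `|sin (φ - θ)| ≤ N θ * A φ`. For mutually orthogonal
directions `θ < φ < θ + π` equality holds in both orders. Ptolemy's identity
`sin (φ - θ) sin (χ - τ) = sin (τ - θ) sin (χ - φ) + sin (φ - τ) sin (χ - θ)` then shows two
things: partner angles are monotone, and `log (A / N)` moves by `O((τ - θ) (χ - φ))` between
neighbouring pairs. Summed over a partition of mesh `h`, the total change is `O(h)`: the
partners of the points of `[a, b]` lie in `[a, b + π]` and are monotone. Hence `A / N` is
constant.
-/

open Real Set Filter Topology

theorem Real.sin_sub_mul_sin_sub (θ τ φ χ : ℝ) :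
    sin (φ - θ) * sin (χ - τ) = sin (τ - θ) * sin (χ - φ) + sin (φ - τ) * sin (χ - θ) := by
  simp only [sin_sub]
  ring

theorem abs_log_sub_log_le {P Q X Y : ℝ} (hP : 0 < P) (hQ : 0 < Q) (hX : 0 < X)
    (h₁ : P * X ≤ Q * Y) (h₂ : Q * X ≤ P * Y) : |log P - log Q| ≤ Y / X - 1 := by
  have key : ∀ {P Q : ℝ}, 0 < P → 0 < Q → P * X ≤ Q * Y → log P - log Q ≤ Y / X - 1 :=
    fun {P Q} hP hQ h => by
      rw [← log_div hP.ne' hQ.ne']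
      refine (log_le_sub_one_of_pos (div_pos hP hQ)).trans (sub_le_sub_right ?_ 1)
      rw [div_le_div_iff₀ hQ hX, mul_comm Y]; exact h
  rw [abs_sub_le_iff]
  exact ⟨key hP hQ h₁, key hQ hP h₂⟩

theorem eq_of_abs_sub_le_mul_sub {f g : ℝ → ℝ} {a b K η : ℝ} (hab : a ≤ b) (hη : 0 < η)
    (h : ∀ s ∈ Icc a b, ∀ t ∈ Icc a b, s ≤ t → t - s ≤ η →
      |f t - f s| ≤ K * (t - s) * (g t - g s)) :
    f a = f b := by
  have key : ∀ n : ℕ, 0 < n → (b - a) / n ≤ η →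
      |f b - f a| ≤ K * (b - a) * (g b - g a) / n := by
    intro n hn hmesh
    set δ := (b - a) / n with hδ
    have hδ0 : 0 ≤ δ := div_nonneg (sub_nonneg.2 hab) n.cast_nonneg
    let θ : ℕ → ℝ := fun i => a + i * δ
    have hθ0 : θ 0 = a := by simp [θ]
    have hθn : θ n = b := by simp only [θ, hδ]; field_simp; ring
    have hθ : ∀ i ≤ n, θ i ∈ Icc a b := fun i hi =>
      ⟨le_add_of_nonneg_right (by positivity),
        hθn ▸ add_le_add_right (mul_le_mul_of_nonneg_right (Nat.cast_le.2 hi) hδ0) a⟩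
    have hstep : ∀ i, θ (i + 1) - θ i = δ := fun i => by simp only [θ]; push_cast; ring
    calc |f b - f a| = |∑ i ∈ Finset.range n, (f (θ (i + 1)) - f (θ i))| := by
          rw [Finset.sum_range_sub (fun i => f (θ i)), hθn, hθ0]
      _ ≤ ∑ i ∈ Finset.range n, |f (θ (i + 1)) - f (θ i)| := Finset.abs_sum_le_sum_abs _ _
      _ ≤ ∑ i ∈ Finset.range n, K * δ * (g (θ (i + 1)) - g (θ i)) := by
          refine Finset.sum_le_sum fun i hi => ?_
          have hi := Finset.mem_range.1 hi
          simpa only [hstep] using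
            h _ (hθ i hi.le) _ (hθ (i + 1) hi) (by linarith [hstep i]) (by rw [hstep]; exact hmesh)
      _ = K * (b - a) * (g b - g a) / n := by
          rw [← Finset.mul_sum, Finset.sum_range_sub (fun i => g (θ i)), hθn, hθ0, hδ]
          ring
  have hev : ∀ᶠ n : ℕ in atTop, |f b - f a| ≤ K * (b - a) * (g b - g a) / n := by
    filter_upwards [eventually_gt_atTop 0,
      (tendsto_const_div_atTop_nhds_zero_nat (b - a)).eventually (eventually_le_nhds hη)]
      with n hn hmesh using key n hn hmesh
  have := ge_of_tendsto (tendsto_const_div_atTop_nhds_zero_nat _) hev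
  exact (sub_eq_zero.1 (abs_nonpos_iff.1 this)).symm

/-- `θ < φ < θ + π` are the angles of two mutually Birkhoff orthogonal directions, where `N` and
`A` are the norm and the antinorm along the parametrization `θ ↦ cos θ • e₁ + sin θ • e₂`. -/
def IsOrthPair (N A : ℝ → ℝ) (θ φ : ℝ) : Prop :=
  φ ∈ Ioo θ (θ + π) ∧ N θ * A φ = sin (φ - θ) ∧ N φ * A θ = sin (φ - θ)

namespace IsOrthPair

variable {N A : ℝ → ℝ} {θ φ τ χ : ℝ}

theorem mul_abs_sin_mul_sin_le (hle : ∀ α β, |sin (β - α)| ≤ N α * A β)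
    (h₁ : IsOrthPair N A θ φ) (h₂ : IsOrthPair N A τ χ) :
    A τ * N θ * |sin (χ - θ) * sin (φ - τ)| ≤ N τ * A θ * (sin (φ - θ) * sin (χ - τ)) := by
  have hC : |sin (χ - θ)| ≤ N χ * A θ := by
    simpa only [← neg_sub χ θ, sin_neg, abs_neg] using hle χ θ
  calc A τ * N θ * |sin (χ - θ) * sin (φ - τ)|
      ≤ A τ * N θ * ((N χ * A θ) * (N τ * A φ)) := by
        rw [abs_mul, mul_comm (A τ)]
        have := (abs_nonneg _).trans (hle θ τ)
        gcongr
        · exact (abs_nonneg _).trans hC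
        · exact hle τ φ
    _ = (N θ * A φ) * (N χ * A τ) * (N τ * A θ) := by ring
    _ = N τ * A θ * (sin (φ - θ) * sin (χ - τ)) := by rw [h₁.2.1, h₂.2.2]; ring

theorem mono (hle : ∀ α β, |sin (β - α)| ≤ N α * A β)
    (h₁ : IsOrthPair N A θ φ) (h₂ : IsOrthPair N A τ χ) (hθτ : θ < τ) : φ ≤ χ := by
  by_contra! hχφ
  obtain ⟨hθφ, hφθ⟩ := h₁.1
  obtain ⟨hτχ, hχτ⟩ := h₂.1
  have hC : 0 < sin (χ - θ) := Real.sin_pos_of_pos_of_lt_pi (by linarith) (by linarith)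
  have hD : 0 < sin (φ - τ) := Real.sin_pos_of_pos_of_lt_pi (by linarith) (by linarith)
  have hτθ : 0 < sin (τ - θ) := Real.sin_pos_of_pos_of_lt_pi (by linarith) (by linarith)
  have hlt : sin (φ - θ) * sin (χ - τ) < sin (χ - θ) * sin (φ - τ) := by
    have hχφ' : sin (χ - φ) < 0 := Real.sin_neg_of_neg_of_neg_pi_lt (by linarith) (by linarith)
    rw [sin_sub_mul_sin_sub θ τ φ χ]
    nlinarith
  have hP : 0 < N θ * A τ := hτθ.trans_le ((le_abs_self _).trans (hle θ τ))
  have hQ : 0 < N τ * A θ := by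
    have := hle τ θ
    rw [← neg_sub, sin_neg, abs_neg, abs_of_pos hτθ] at this
    linarith
  have c₁ := mul_abs_sin_mul_sin_le hle h₁ h₂
  have c₂ := mul_abs_sin_mul_sin_le hle h₂ h₁
  rw [abs_of_pos (mul_pos hC hD)] at c₁
  rw [abs_of_pos (mul_pos hD hC)] at c₂
  nlinarith

theorem abs_log_sub_le (hle : ∀ α β, |sin (β - α)| ≤ N α * A β)
    (hN : ∀ α, 0 < N α) (hA : ∀ α, 0 < A α)
    (h₁ : IsOrthPair N A θ φ) (h₂ : IsOrthPair N A τ χ) (hθτ : θ ≤ τ) (hφχ : φ ≤ χ)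
    {κ : ℝ} (hκ : 0 < κ) (hC : κ ≤ sin (χ - θ)) (hD : κ ≤ sin (φ - τ)) :
    |(log (A τ) - log (N τ)) - (log (A θ) - log (N θ))| ≤ (κ ^ 2)⁻¹ * (τ - θ) * (χ - φ) := by
  set X := sin (χ - θ) * sin (φ - τ)
  have hX : κ ^ 2 ≤ X := by rw [sq]; exact mul_le_mul hC hD hκ.le (hκ.le.trans hC)
  have hX0 : 0 < X := (pow_pos hκ 2).trans_le hX
  have c₁ := mul_abs_sin_mul_sin_le hle h₁ h₂
  have c₂ := mul_abs_sin_mul_sin_le hle h₂ h₁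
  rw [abs_of_pos hX0] at c₁
  rw [mul_comm (sin (φ - τ)), abs_of_pos hX0, mul_comm (sin (χ - τ))] at c₂
  have hsin : sin (τ - θ) * sin (χ - φ) ≤ (τ - θ) * (χ - φ) := by
    calc sin (τ - θ) * sin (χ - φ) ≤ |sin (τ - θ)| * |sin (χ - φ)| := by
          rw [← abs_mul]; exact le_abs_self _
      _ ≤ |τ - θ| * |χ - φ| :=
          mul_le_mul abs_sin_le_abs abs_sin_le_abs (abs_nonneg _) (abs_nonneg _)
      _ = (τ - θ) * (χ - φ) := by
          rw [abs_of_nonneg (sub_nonneg.2 hθτ), abs_of_nonneg (sub_nonneg.2 hφχ)]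
  rw [show log (A τ) - log (N τ) - (log (A θ) - log (N θ))
      = log (A τ * N θ) - log (N τ * A θ) by
    rw [log_mul (hA τ).ne' (hN θ).ne', log_mul (hN τ).ne' (hA θ).ne']; ring]
  calc _ ≤ sin (φ - θ) * sin (χ - τ) / X - 1 :=
        abs_log_sub_log_le (mul_pos (hA τ) (hN θ)) (mul_pos (hN τ) (hA θ)) hX0 c₁ (by linarith)
    _ = sin (τ - θ) * sin (χ - φ) / X := by
        rw [sin_sub_mul_sin_sub θ τ φ χ]; field_simp; ring
    _ ≤ (τ - θ) * (χ - φ) / κ ^ 2 :=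
        div_le_div₀ (mul_nonneg (sub_nonneg.2 hθτ) (sub_nonneg.2 hφχ)) hsin (by positivity) hX
    _ = (κ ^ 2)⁻¹ * (τ - θ) * (χ - φ) := by ring

end IsOrthPair

theorem div_eq_div_of_forall_isOrthPair {N A : ℝ → ℝ} (hNc : Continuous N)
    (hAc : Continuous A) (hN : ∀ α, 0 < N α) (hA : ∀ α, 0 < A α)
    (hle : ∀ α β, |sin (β - α)| ≤ N α * A β) (hpair : ∀ θ, ∃ φ, IsOrthPair N A θ φ)
    (a b : ℝ) : A a / N a = A b / N b := by
  choose g hg using hpair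
  have key : ∀ a b, a ≤ b → log (A a) - log (N a) = log (A b) - log (N b) := by
    intro a b hab
    have hK : (Icc a (b + π)).Nonempty := nonempty_Icc.2 (by linarith [pi_pos])
    obtain ⟨α₀, -, hα₀⟩ := isCompact_Icc.exists_isMinOn hK hNc.continuousOn
    obtain ⟨β₀, -, hβ₀⟩ := isCompact_Icc.exists_isMinOn hK hAc.continuousOn
    set δ := N α₀ * A β₀
    have hδ : 0 < δ := mul_pos (hN α₀) (hA β₀)
    have hδle : ∀ θ ∈ Icc a b, δ ≤ sin (g θ - θ) := by
      intro θ hθ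
      obtain ⟨⟨h₁, h₂⟩, h, -⟩ := hg θ
      rw [← h]
      exact mul_le_mul (hα₀ ⟨hθ.1, by linarith [hθ.2, pi_pos]⟩)
        (hβ₀ ⟨by linarith [hθ.1], by linarith [hθ.2]⟩) (hA β₀).le (hN θ).le
    refine eq_of_abs_sub_le_mul_sub (f := fun θ => log (A θ) - log (N θ)) (g := g)
      (K := ((δ / 2) ^ 2)⁻¹) hab (half_pos hδ) ?_
    intro s hs t ht hst hts
    rcases hst.eq_or_lt with rfl | hlt
    · simp
    have hC := abs_le.1 ((abs_sin_sub_sin_le (g t - s) (g t - t)).trans_eq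
      (by rw [sub_sub_sub_cancel_left, abs_of_nonneg (sub_nonneg.2 hst)]))
    have hD := abs_le.1 ((abs_sin_sub_sin_le (g s - t) (g s - s)).trans_eq
      (by rw [sub_sub_sub_cancel_left, abs_sub_comm, abs_of_nonneg (sub_nonneg.2 hst)]))
    exact (hg s).abs_log_sub_le hle hN hA (hg t) hst ((hg s).mono hle (hg t) hlt)
      (half_pos hδ) (by linarith [hδle t ht]) (by linarith [hδle s hs])
  have hlog : ∀ α, log (A α / N α) = log (A α) - log (N α) :=
    fun α => log_div (hA α).ne' (hN α).ne'
  refine log_injOn_pos (div_pos (hA a) (hN a)) (div_pos (hA b) (hN b)) ?_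
  rw [hlog, hlog]
  rcases le_total a b with hab | hba
  exacts [key a b hab, (key b a hba).symm]

section

variable {E : Type*} [NormedAddCommGroup E] [NormedSpace ℝ E]

namespace BirkhoffOrth

theorem zero_left (y : E) : BirkhoffOrth 0 y := fun t => by simp

theorem zero_right (x : E) : BirkhoffOrth x 0 := fun t => by simp

theorem abs_mul_norm_le {x y : E} (h : BirkhoffOrth x y) (α β : ℝ) :
    |α| * ‖x‖ ≤ ‖α • x + β • y‖ := by
  rcases eq_or_ne α 0 with rfl | hα
  · simp
  calc |α| * ‖x‖ ≤ |α| * ‖x + (β / α) • y‖ := mul_le_mul_of_nonneg_left (h _) (abs_nonneg _)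
    _ = ‖α • x + β • y‖ := by
        rw [← Real.norm_eq_abs, ← norm_smul, smul_add, smul_smul, mul_div_cancel₀ β hα]

theorem smul {x y : E} (h : BirkhoffOrth x y) (c d : ℝ) : BirkhoffOrth (c • x) (d • y) :=
  fun t => by
    simpa only [norm_smul, smul_smul, Real.norm_eq_abs] using h.abs_mul_norm_le c (t * d)

theorem linearIndependent {x y : E} (h : BirkhoffOrth x y) (hx : x ≠ 0) (hy : y ≠ 0) :
    LinearIndependent ℝ ![x, y] := by
  refine LinearIndependent.pair_iff.2 fun s t hst => ?_
  have hs : s = 0 := by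
    have h0 := h.abs_mul_norm_le s t
    rw [hst, norm_zero] at h0
    exact abs_nonpos_iff.1 (by nlinarith [abs_nonneg s, norm_pos_iff.2 hx])
  subst hs
  simpa [hy] using hst

end BirkhoffOrth

theorem exists_add_smul_birkhoffOrth [FiniteDimensional ℝ E] (x y : E) :
    ∃ t : ℝ, BirkhoffOrth (x + t • y) y := by
  have hclosed := Submodule.closed_of_finiteDimensional (ℝ ∙ y)
  obtain ⟨p, hp, hdist⟩ := hclosed.exists_infDist_eq_dist ⟨0, Submodule.zero_mem _⟩ x
  obtain ⟨c, rfl⟩ := Submodule.mem_span_singleton.1 hp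
  refine ⟨-c, fun t => ?_⟩
  calc ‖x + -c • y‖ = Metric.infDist x (ℝ ∙ y) := by
        rw [hdist, dist_eq_norm, neg_smul, sub_eq_add_neg]
    _ ≤ dist x ((c - t) • y) := Metric.infDist_le_dist_of_mem
        (Submodule.smul_mem _ _ (Submodule.mem_span_singleton_self y))
    _ = ‖x + -c • y + t • y‖ := by
        rw [dist_eq_norm, sub_smul, neg_smul]; congr 1; abel

section plane

variable {ω : E →ₗ[ℝ] E →ₗ[ℝ] ℝ}

theorem exists_smul_add_smul_eq (hdim : Module.finrank ℝ E = 2) {u v : E}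
    (huv : LinearIndependent ℝ ![u, v]) (z : E) : ∃ s t : ℝ, s • u + t • v = z := by
  have hz : z ∈ Submodule.span ℝ (range ![u, v]) := by
    rw [huv.span_eq_top_of_card_eq_finrank (by simp [hdim])]; trivial
  obtain ⟨c, hc⟩ := (Submodule.mem_span_range_iff_exists_fun ℝ).1 hz
  exact ⟨c 0, c 1, by simpa [Fin.sum_univ_two] using hc⟩

theorem linearIndependent_of_apply_ne_zero (halt : ∀ x : E, ω x x = 0) {u v : E}
    (huv : ω u v ≠ 0) : LinearIndependent ℝ ![u, v] := by
  refine LinearIndependent.pair_iff.2 fun s t hst => ⟨?_, ?_⟩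
  · simpa [halt, huv] using congrArg (ω · v) hst
  · simpa [halt, huv] using congrArg (ω u) hst

theorem exists_apply_eq_one (hω : ω ≠ 0) : ∃ e₁ e₂ : E, ω e₁ e₂ = 1 := by
  obtain ⟨u, v, huv⟩ : ∃ u v, ω u v ≠ 0 := by
    by_contra! h
    exact hω (LinearMap.ext fun u => LinearMap.ext (h u))
  exact ⟨u, (ω u v)⁻¹ • v, by simp [huv]⟩

theorem exists_apply_ne_zero (hdim : Module.finrank ℝ E = 2) (halt : ∀ x : E, ω x x = 0)
    (hω : ω ≠ 0) {y : E} (hy : y ≠ 0) : ∃ z, ω z y ≠ 0 := by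
  obtain ⟨e₁, e₂, he⟩ := exists_apply_eq_one hω
  obtain ⟨s, t, rfl⟩ := exists_smul_add_smul_eq hdim
    (linearIndependent_of_apply_ne_zero halt (he.symm ▸ one_ne_zero)) y
  by_contra! h
  have he' : ω e₂ e₁ = -1 := by rw [← LinearMap.IsAlt.neg halt, he]
  have hs : s = 0 := by simpa [halt, he'] using h e₂
  have ht : t = 0 := by simpa [halt, he] using h e₁
  simp [hs, ht] at hy

noncomputable def polarVec (e₁ e₂ : E) (θ : ℝ) : E := cos θ • e₁ + sin θ • e₂

theorem continuous_polarVec (e₁ e₂ : E) : Continuous (polarVec e₁ e₂) := by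
  unfold polarVec; fun_prop

theorem polarVec_sub_int_mul_pi (e₁ e₂ : E) (θ : ℝ) (n : ℤ) :
    polarVec e₁ e₂ (θ - n * π) = cos (n * π) • polarVec e₁ e₂ θ := by
  simp only [polarVec, cos_sub, sin_sub, sin_int_mul_pi, smul_add, smul_smul]
  congr 1 <;> congr 1 <;> ring

theorem apply_polarVec (halt : ∀ x : E, ω x x = 0) {e₁ e₂ : E} (he : ω e₁ e₂ = 1) (θ φ : ℝ) :
    ω (polarVec e₁ e₂ θ) (polarVec e₁ e₂ φ) = sin (φ - θ) := by
  have he' : ω e₂ e₁ = -1 := by rw [← LinearMap.IsAlt.neg halt, he]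
  simp [polarVec, halt, he, he', sin_sub]
  ring

theorem polarVec_ne_zero (halt : ∀ x : E, ω x x = 0) {e₁ e₂ : E} (he : ω e₁ e₂ = 1) (θ : ℝ) :
    polarVec e₁ e₂ θ ≠ 0 := fun h => by
  simpa [h] using apply_polarVec halt he θ (θ + π / 2)

theorem exists_polarVec_eq_smul (hdim : Module.finrank ℝ E = 2) (halt : ∀ x : E, ω x x = 0)
    {e₁ e₂ : E} (he : ω e₁ e₂ = 1) {z : E} (hz : z ≠ 0) (θ : ℝ) :
    ∃ φ ∈ Ico θ (θ + π), ∃ s : ℝ, polarVec e₁ e₂ φ = s • z := by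
  obtain ⟨a, b, rfl⟩ := exists_smul_add_smul_eq hdim
    (linearIndependent_of_apply_ne_zero halt (he.symm ▸ one_ne_zero)) z
  set ζ : ℂ := ⟨a, b⟩
  have hζ : ζ ≠ 0 := fun h => hz (by simp [Complex.ext_iff, ζ] at h; simp [h])
  have harg : polarVec e₁ e₂ ζ.arg = ‖ζ‖⁻¹ • (a • e₁ + b • e₂) := by
    simp only [polarVec, Complex.cos_arg hζ, Complex.sin_arg, smul_add, smul_smul, ζ]
    congr 2 <;> ring
  refine ⟨toIcoMod pi_pos θ ζ.arg, toIcoMod_mem_Ico _ _ _,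
    cos (toIcoDiv pi_pos θ ζ.arg * π) * ‖ζ‖⁻¹, ?_⟩
  rw [mul_smul, ← harg, ← polarVec_sub_int_mul_pi, ← zsmul_eq_mul, ← self_sub_toIcoMod,
    sub_sub_cancel]

end plane

variable [FiniteDimensional ℝ E]

noncomputable def antinorm (ω : E →ₗ[ℝ] E →ₗ[ℝ] ℝ) (y : E) : ℝ :=
  ‖LinearMap.toContinuousLinearMap (ω.flip y)‖

section antinorm

variable (ω : E →ₗ[ℝ] E →ₗ[ℝ] ℝ)

theorem abs_apply_le_antinorm (x y : E) : |ω x y| ≤ ‖x‖ * antinorm ω y := by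
  rw [mul_comm]
  simpa [antinorm] using (LinearMap.toContinuousLinearMap (ω.flip y)).le_opNorm x

theorem antinorm_le {y : E} {M : ℝ} (hM : 0 ≤ M) (h : ∀ z, |ω z y| ≤ M * ‖z‖) :
    antinorm ω y ≤ M :=
  ContinuousLinearMap.opNorm_le_bound _ hM (by simpa using h)

@[simp]
theorem antinorm_smul (r : ℝ) (y : E) : antinorm ω (r • y) = |r| * antinorm ω y := by
  simp [antinorm, norm_smul]

@[simp]
theorem antinorm_zero : antinorm ω (0 : E) = 0 := by
  simp [antinorm]

theorem continuous_antinorm : Continuous (antinorm ω) :=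
  (LinearMap.continuous_of_finiteDimensional
    (LinearMap.toContinuousLinearMap.toLinearMap ∘ₗ ω.flip)).norm

end antinorm

section birkhoff

variable {ω : E →ₗ[ℝ] E →ₗ[ℝ] ℝ}

theorem antinorm_pos (hdim : Module.finrank ℝ E = 2) (halt : ∀ x : E, ω x x = 0)
    (hω : ω ≠ 0) {y : E} (hy : y ≠ 0) : 0 < antinorm ω y := by
  obtain ⟨z, hz⟩ := exists_apply_ne_zero hdim halt hω hy
  exact norm_pos_iff.2 fun h => hz (by simpa using congrArg (· z) h)

theorem birkhoffOrth_iff (hdim : Module.finrank ℝ E = 2) (halt : ∀ x : E, ω x x = 0)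
    (hω : ω ≠ 0) {x y : E} (hy : y ≠ 0) :
    BirkhoffOrth x y ↔ |ω x y| = ‖x‖ * antinorm ω y := by
  constructor
  · intro h
    rcases eq_or_ne x 0 with rfl | hx
    · simp
    have hxpos : 0 < ‖x‖ := norm_pos_iff.2 hx
    refine le_antisymm (abs_apply_le_antinorm ω x y) ?_
    rw [← le_div_iff₀' hxpos]
    refine antinorm_le ω (by positivity) fun z => ?_
    obtain ⟨α, β, rfl⟩ := exists_smul_add_smul_eq hdim (h.linearIndependent hx hy) z
    rw [show ω (α • x + β • y) y = α * ω x y by simp [halt], abs_mul, div_mul_eq_mul_div,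
      le_div_iff₀ hxpos]
    calc |α| * |ω x y| * ‖x‖ = |ω x y| * (|α| * ‖x‖) := by ring
      _ ≤ |ω x y| * ‖α • x + β • y‖ :=
          mul_le_mul_of_nonneg_left (h.abs_mul_norm_le α β) (abs_nonneg _)
  · intro h t
    have hle := abs_apply_le_antinorm ω (x + t • y) y
    rw [show ω (x + t • y) y = ω x y by simp [halt], h] at hle
    exact le_of_mul_le_mul_right hle (antinorm_pos hdim halt hω hy)

theorem exists_birkhoffOrth_left (hdim : Module.finrank ℝ E = 2) (halt : ∀ x : E, ω x x = 0)
    (hω : ω ≠ 0) {y : E} (hy : y ≠ 0) : ∃ x ≠ 0, BirkhoffOrth x y := by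
  obtain ⟨z, hz⟩ := exists_apply_ne_zero hdim halt hω hy
  obtain ⟨t, ht⟩ := exists_add_smul_birkhoffOrth z y
  refine ⟨z + t • y, fun h0 => hz ?_, ht⟩
  simpa [halt] using congrArg (ω · y) h0

theorem BirkhoffOrth.symm_of_antinorm_eq (hdim : Module.finrank ℝ E = 2)
    (halt : ∀ x : E, ω x x = 0) (hω : ω ≠ 0) {c : ℝ} (hc : ∀ y, antinorm ω y = c * ‖y‖)
    {x y : E} (h : BirkhoffOrth x y) : BirkhoffOrth y x := by
  rcases eq_or_ne x 0 with rfl | hx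
  · exact BirkhoffOrth.zero_right y
  rcases eq_or_ne y 0 with rfl | hy
  · exact BirkhoffOrth.zero_left x
  rw [birkhoffOrth_iff hdim halt hω hy] at h
  rw [birkhoffOrth_iff hdim halt hω hx, ← LinearMap.IsAlt.neg halt x y, abs_neg, h, hc, hc]
  ring

theorem antinorm_eq_mul_norm_of_forall (hdim : Module.finrank ℝ E = 2)
    (halt : ∀ x : E, ω x x = 0) (hω : ω ≠ 0) {c : ℝ}
    (hc : ∀ x y : E, ‖x‖ = 1 → ‖y‖ = 1 → BirkhoffOrth x y → |ω x y| = c) (y : E) :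
    antinorm ω y = c * ‖y‖ := by
  rcases eq_or_ne y 0 with rfl | hy
  · simp
  obtain ⟨x, hx, hxy⟩ := exists_birkhoffOrth_left hdim halt hω hy
  have hx₁ : ‖‖x‖⁻¹ • x‖ = 1 := norm_smul_inv_norm hx
  have hy₁ : ‖‖y‖⁻¹ • y‖ = 1 := norm_smul_inv_norm hy
  have h := hxy.smul ‖x‖⁻¹ ‖y‖⁻¹
  have hval := hc _ _ hx₁ hy₁ h
  have hy' : ‖y‖⁻¹ • y ≠ 0 := smul_ne_zero (inv_ne_zero (norm_ne_zero_iff.2 hy)) hy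
  rw [(birkhoffOrth_iff hdim halt hω hy').1 h, hx₁, one_mul, antinorm_smul, abs_inv,
    abs_norm] at hval
  field_simp at hval
  linarith

theorem exists_isOrthPair (hdim : Module.finrank ℝ E = 2) (halt : ∀ x : E, ω x x = 0)
    {e₁ e₂ : E} (he : ω e₁ e₂ = 1) (hsym : ∀ x y : E, BirkhoffOrth x y → BirkhoffOrth y x)
    (θ : ℝ) : ∃ φ, IsOrthPair (fun α => ‖polarVec e₁ e₂ α‖)
      (fun α => antinorm ω (polarVec e₁ e₂ α)) θ φ := by
  have hω : ω ≠ 0 := by rintro rfl; simp at he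
  have hv := polarVec_ne_zero halt he θ
  obtain ⟨w, hw, hwv⟩ := exists_birkhoffOrth_left hdim halt hω hv
  obtain ⟨φ, hφ, s, hs⟩ := exists_polarVec_eq_smul hdim halt he hw θ
  have h₁ : BirkhoffOrth (polarVec e₁ e₂ θ) (polarVec e₁ e₂ φ) := by
    simpa [hs] using (hsym w _ hwv).smul 1 s
  have h₂ : BirkhoffOrth (polarVec e₁ e₂ φ) (polarVec e₁ e₂ θ) := by
    simpa [hs] using hwv.smul s 1
  rw [birkhoffOrth_iff hdim halt hω (polarVec_ne_zero halt he φ), apply_polarVec halt he] at h₁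
  rw [birkhoffOrth_iff hdim halt hω hv, apply_polarVec halt he, ← neg_sub, sin_neg,
    abs_neg] at h₂
  have hpos : 0 < |sin (φ - θ)| :=
    h₁ ▸ mul_pos (norm_pos_iff.2 hv) (antinorm_pos hdim halt hω (polarVec_ne_zero halt he φ))
  have hθφ : θ < φ := hφ.1.lt_of_ne (by rintro rfl; simp at hpos)
  have hsin : 0 < sin (φ - θ) :=
    sin_pos_of_pos_of_lt_pi (sub_pos.2 hθφ) (by linarith [hφ.2])
  rw [abs_of_pos hsin] at h₁ h₂
  exact ⟨φ, ⟨hθφ, hφ.2⟩, h₁.symm, h₂.symm⟩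

theorem exists_antinorm_eq_mul_norm (hdim : Module.finrank ℝ E = 2)
    (halt : ∀ x : E, ω x x = 0) (hω : ω ≠ 0)
    (hsym : ∀ x y : E, BirkhoffOrth x y → BirkhoffOrth y x) :
    ∃ c > 0, ∀ y, antinorm ω y = c * ‖y‖ := by
  obtain ⟨e₁, e₂, he⟩ := exists_apply_eq_one hω
  set N := fun α => ‖polarVec e₁ e₂ α‖
  set A := fun α => antinorm ω (polarVec e₁ e₂ α)
  have hN : ∀ α, 0 < N α := fun α => norm_pos_iff.2 (polarVec_ne_zero halt he α)
  have hA : ∀ α, 0 < A α := fun α => antinorm_pos hdim halt hω (polarVec_ne_zero halt he α)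
  have hle : ∀ α β, |sin (β - α)| ≤ N α * A β := fun α β => by
    simpa [apply_polarVec halt he] using
      abs_apply_le_antinorm ω (polarVec e₁ e₂ α) (polarVec e₁ e₂ β)
  have hconst := div_eq_div_of_forall_isOrthPair (N := N) (A := A)
    (continuous_polarVec e₁ e₂).norm ((continuous_antinorm ω).comp (continuous_polarVec e₁ e₂))
    hN hA hle (exists_isOrthPair hdim halt he hsym)
  refine ⟨A 0 / N 0, div_pos (hA 0) (hN 0), fun y => ?_⟩
  rcases eq_or_ne y 0 with rfl | hy
  · simp
  obtain ⟨φ, -, s, hs⟩ := exists_polarVec_eq_smul hdim halt he hy 0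
  have hs0 : s ≠ 0 := by rintro rfl; exact polarVec_ne_zero halt he φ (by simpa using hs)
  rw [← hconst φ]
  simp only [A, N, hs, antinorm_smul, norm_smul, Real.norm_eq_abs]
  field_simp

end birkhoff

end

/-- A normed plane is Radon (Birkhoff orthogonality is symmetric) iff all
"Birkhoff rectangles" with unit sides have the same area: there is `λ > 0`
with `|ω(x, y)| = λ` whenever `x, y` are unit vectors with `x ⊣_B y`. -/
theorem stmt_17 {E : Type*} [NormedAddCommGroup E] [NormedSpace ℝ E]
    (hdim : Module.finrank ℝ E = 2)
    (ω : E →ₗ[ℝ] E →ₗ[ℝ] ℝ) (halt : ∀ x : E, ω x x = 0) (hω : ω ≠ 0) :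
    (∀ x y : E, BirkhoffOrth x y → BirkhoffOrth y x) ↔
      ∃ lam : ℝ, 0 < lam ∧ ∀ x y : E, ‖x‖ = 1 → ‖y‖ = 1 →
        BirkhoffOrth x y → |ω x y| = lam := by
  have : FiniteDimensional ℝ E := .of_finrank_eq_succ hdim
  constructor
  · intro hsym
    obtain ⟨c, hc, hcy⟩ := exists_antinorm_eq_mul_norm hdim halt hω hsym
    refine ⟨c, hc, fun x y hx hy hxy => ?_⟩
    have hy0 : y ≠ 0 := norm_ne_zero_iff.1 (hy ▸ one_ne_zero)
    rw [(birkhoffOrth_iff hdim halt hω hy0).1 hxy, hcy, hx, hy, one_mul, mul_one]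
  · rintro ⟨c, -, hc⟩ x y
    exact BirkhoffOrth.symm_of_antinorm_eq hdim halt hω
      (antinorm_eq_mul_norm_of_forall hdim halt hω hc)
end
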